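/- Let {w_t}_{t∈ℕ} be a sequence of nonnegative random variables converging exponentially almost surely to zero (i.e., there exists γ > 1 with γ^t w_t → 0 a.s.), and let {z_t}_{t∈ℕ} be an identically distributed sequence of nonnegative random variables with E[z_0] < ∞. Then ∑_{t=1}^∞ z_t w_t < ∞ almost surely, and consequently T^{-1} ∑_{t=1}^T z_t w_t → 0 almost surely as T → ∞. -/

import Mathlib

/-!
By Markov's inequality and identical distribution, `μ {ρ ^ t ≤ ‖z t‖} ≤ E‖z 0‖ · ρ⁻ᵗ` for any
`ρ > 1`, which is summable; Borel–Cantelli then gives `‖z t‖ < ρ ^ t` eventually, almost surely.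
Choosing `1 < ρ < γ`, the products are eventually dominated by the geometric sequence `(ρ / γ) ^ t`.
Summability makes the partial sums converge, so their Cesàro averages tend to zero.
-/

open MeasureTheory Filter Topology

lemma summable_mul_of_norm_le_pow_of_tendsto_pow_mul {a b : ℕ → ℝ} {r γ : ℝ} (hr : 0 ≤ r)
    (hrγ : r < γ) (ha : ∀ᶠ t in atTop, ‖a t‖ ≤ r ^ t)
    (hb : Tendsto (fun t => γ ^ t * b t) atTop (𝓝 0)) :
    Summable fun t => a t * b t := by
  have hγ : 0 < γ := hr.trans_lt hrγ
  have hb_le : ∀ᶠ t in atTop, ‖γ ^ t * b t‖ ≤ 1 :=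
    hb.norm.eventually (eventually_le_nhds (by simp))
  refine Summable.of_norm_bounded_eventually
    (summable_geometric_of_lt_one (div_nonneg hr hγ.le) ((div_lt_one hγ).2 hrγ)) ?_
  rw [Nat.cofinite_eq_atTop]
  filter_upwards [ha, hb_le] with t hat hbt
  have hγt : 0 < γ ^ t := pow_pos hγ t
  rw [div_pow, le_div_iff₀ hγt]
  calc ‖a t * b t‖ * γ ^ t = ‖a t‖ * ‖γ ^ t * b t‖ := by
        rw [norm_mul, norm_mul, norm_pow, Real.norm_of_nonneg hγ.le]; ring
    _ ≤ r ^ t * 1 := mul_le_mul hat hbt (norm_nonneg _) (pow_nonneg hr t)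
    _ = r ^ t := mul_one _

lemma tendsto_inv_mul_sum_Icc_of_summable {f : ℕ → ℝ} (hf : Summable f) :
    Tendsto (fun T : ℕ => (T : ℝ)⁻¹ * ∑ t ∈ Finset.Icc 1 T, f t) atTop (𝓝 0) := by
  have hpartial : Tendsto (fun T : ℕ => ∑ t ∈ Finset.range (T + 1), f t - f 0) atTop
      (𝓝 (∑' t, f t - f 0)) :=
    ((tendsto_add_atTop_iff_nat 1).2 hf.hasSum.tendsto_sum_nat).sub_const _
  have h := tendsto_inv_atTop_nhds_zero_nat.mul hpartial
  rw [zero_mul] at h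
  refine h.congr fun T => ?_
  rw [Finset.range_eq_Ico, Finset.sum_eq_sum_Ico_succ_bot T.add_one_pos, add_sub_cancel_left,
    zero_add, Finset.Ico_add_one_right_eq_Icc]

section BorelCantelli

variable {Ω E : Type*} {mΩ : MeasurableSpace Ω} {μ : Measure Ω}
  [NormedAddCommGroup E] [MeasurableSpace E] [OpensMeasurableSpace E]

lemma measureReal_pow_le_norm_le_integral_mul {X : ℕ → Ω → E}
    (hident : ∀ t, ProbabilityTheory.IdentDistrib (X t) (X 0) μ μ) (hint : Integrable (X 0) μ)
    {ρ : ℝ} (hρ : 0 < ρ) (t : ℕ) :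
    μ.real {ω | ρ ^ t ≤ ‖X t ω‖} ≤ (∫ ω, ‖X 0 ω‖ ∂μ) * ρ⁻¹ ^ t := by
  have hsame : μ.real {ω | ρ ^ t ≤ ‖X t ω‖} = μ.real {ω | ρ ^ t ≤ ‖X 0 ω‖} :=
    congrArg ENNReal.toReal ((hident t).norm.measure_mem_eq (measurableSet_Ici (a := ρ ^ t)))
  have hmarkov := mul_meas_ge_le_integral_of_nonneg (Eventually.of_forall fun ω => norm_nonneg _)
    hint.norm (ρ ^ t)
  rw [hsame, inv_pow, ← div_eq_mul_inv, le_div_iff₀ (pow_pos hρ t), mul_comm]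
  exact hmarkov

lemma ae_eventually_norm_lt_pow [IsFiniteMeasure μ] {X : ℕ → Ω → E}
    (hident : ∀ t, ProbabilityTheory.IdentDistrib (X t) (X 0) μ μ) (hint : Integrable (X 0) μ)
    {ρ : ℝ} (hρ : 1 < ρ) :
    ∀ᵐ ω ∂μ, ∀ᶠ t in atTop, ‖X t ω‖ < ρ ^ t := by
  have hρ0 : 0 < ρ := one_pos.trans hρ
  have hsummable : Summable fun t => μ.real {ω | ρ ^ t ≤ ‖X t ω‖} :=
    Summable.of_nonneg_of_le (fun t => measureReal_nonneg)
      (measureReal_pow_le_norm_le_integral_mul hident hint hρ0)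
      ((summable_geometric_of_lt_one (inv_nonneg.2 hρ0.le) (inv_lt_one_of_one_lt₀ hρ)).mul_left _)
  have hBC := ae_eventually_notMem (μ := μ) (s := fun t => {ω | ρ ^ t ≤ ‖X t ω‖})
    (by simpa only [measureReal_def, ENNReal.ofReal_toReal (measure_ne_top μ _)] using hsummable.tsum_ofReal_ne_top)
  filter_upwards [hBC] with ω hω
  simpa only [Set.mem_ofPred_eq, not_le] using hω

end BorelCantelli

theorem stmt_11_general {Ω : Type*} {mΩ : MeasurableSpace Ω} (μ : Measure Ω) [MeasureTheory.IsProbabilityMeasure μ]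
    (w z : ℕ → Ω → ℝ)
    (heas : ∃ γ : ℝ, 1 < γ ∧ ∀ᵐ ω ∂μ, Tendsto (fun t : ℕ => γ ^ t * w t ω) atTop (nhds 0))
    (hident : ∀ t, ProbabilityTheory.IdentDistrib (z t) (z 0) μ μ)
    (hint : Integrable (z 0) μ) :
    (∀ᵐ ω ∂μ, Summable (fun t : ℕ => z t ω * w t ω)) ∧
    (∀ᵐ ω ∂μ, Tendsto (fun T : ℕ => (T : ℝ)⁻¹ * ∑ t ∈ Finset.Icc 1 T, z t ω * w t ω)
      atTop (nhds 0)) := by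
  obtain ⟨γ, hγ, hconv⟩ := heas
  obtain ⟨ρ, hρ, hργ⟩ := exists_between hγ
  have hsum : ∀ᵐ ω ∂μ, Summable fun t => z t ω * w t ω := by
    filter_upwards [ae_eventually_norm_lt_pow hident hint hρ, hconv] with ω hz hw
    exact summable_mul_of_norm_le_pow_of_tendsto_pow_mul (by linarith) hργ
      (hz.mono fun _ => le_of_lt) hw
  exact ⟨hsum, hsum.mono fun _ => tendsto_inv_mul_sum_Icc_of_summable⟩

theorem stmt_11 {Ω : Type*} {mΩ : MeasurableSpace Ω} (μ : Measure Ω) [MeasureTheory.IsProbabilityMeasure μ]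
    (w z : ℕ → Ω → ℝ)
    (hw0 : ∀ t, ∀ᵐ ω ∂μ, 0 ≤ w t ω) (hz0 : ∀ t, ∀ᵐ ω ∂μ, 0 ≤ z t ω)
    (hzmeas : ∀ t, AEMeasurable (z t) μ)
    (heas : ∃ γ : ℝ, 1 < γ ∧ ∀ᵐ ω ∂μ, Tendsto (fun t : ℕ => γ ^ t * w t ω) atTop (nhds 0))
    (hident : ∀ t, ProbabilityTheory.IdentDistrib (z t) (z 0) μ μ)
    (hint : Integrable (z 0) μ) :
    (∀ᵐ ω ∂μ, Summable (fun t : ℕ => z t ω * w t ω)) ∧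
    (∀ᵐ ω ∂μ, Tendsto (fun T : ℕ => (T : ℝ)⁻¹ * ∑ t ∈ Finset.Icc 1 T, z t ω * w t ω)
      atTop (nhds 0)) :=
  stmt_11_general (mΩ := mΩ) μ w z heas hident hint
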